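/- arXiv:2103.02500 — 2 statements merged into one kernel-verified Lean document; each statement's English description precedes it below -/
import Mathlib

section
/- Let p be a prime and k ≥ 1. Let L_k denote the set of all linear forms in the polynomial ring (ℤ/p)[x_1, …, x_k], i.e. all polynomials of the form a_1·x_1 + ⋯ + a_k·x_k with coefficients a_i ∈ ℤ/p (a set of p^k elements, including 0). Then the polynomial 1 − ∏_{l ∈ L_k} (1 + l) belongs to the ideal generated by x_1^{p−1}, x_2^{p−1}, …, x_k^{p−1}. -/
/-!
Over a finite field `K` with `q` elements, homogenizing `∏_{c ∈ K} (X - c) = X^q - X` gives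
`∏_{c ∈ K} (u + c x) = u^q - u x^(q-1)` in every commutative `K`-algebra. Hence if every `x_i`
satisfies `x_i^(q-1) = 0`, peeling off one variable at a time shows
`∏_{a ∈ K^n} (u + ∑ a_i x_i) = u^(q^n)`; take `u = 1` in the quotient by `(x_1^(q-1), …, x_k^(q-1))`.
-/

namespace FiniteField

open Polynomial

theorem prod_X_sub_C_eq_X_pow_card_sub_X (K : Type*) [Field K] [Fintype K] :
    ∏ c : K, (X - C c) = X ^ Fintype.card K - X := by
  have hmonic : (X ^ Fintype.card K - X : K[X]).Monic :=
    monic_X_pow_sub (by rw [degree_X]; exact_mod_cast Fintype.one_lt_card)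
  rw [← prod_multiset_X_sub_C_of_monic_of_roots_card_eq hmonic, roots_X_pow_card_sub_X]
  · rfl
  · rw [roots_X_pow_card_sub_X, X_pow_card_sub_X_natDegree_eq K Fintype.one_lt_card]
    rfl

variable {K S : Type*} [Field K] [Fintype K] [CommRing S] [Algebra K S]

theorem prod_sub_smul_eq (u x : S) :
    ∏ c : K, (u - c • x) = u ^ Fintype.card K - u * x ^ (Fintype.card K - 1) := by
  have hdeg : ∀ c ∈ (Finset.univ : Finset K), (X - C c).natDegree ≤ 1 :=
    fun c _ => natDegree_X_sub_C_le c
  have h := congrArg (MvPolynomial.aeval ![u, x]) (homogenize_finsetProd hdeg)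
  rw [prod_X_sub_C_eq_X_pow_card_sub_X, Finset.sum_const, Finset.card_univ, smul_eq_mul,
    mul_one] at h
  simpa [homogenize_sub, homogenize_X_pow, Algebra.smul_def] using h.symm

theorem prod_add_smul_eq (u x : S) :
    ∏ c : K, (u + c • x) = u ^ Fintype.card K - u * x ^ (Fintype.card K - 1) := by
  rw [← prod_sub_smul_eq]
  exact Fintype.prod_equiv (Equiv.neg K) _ _ fun c => by simp [sub_eq_add_neg]

theorem prod_add_sum_smul_eq_pow {n : ℕ} (u : S) (x : Fin n → S)
    (hx : ∀ i, x i ^ (Fintype.card K - 1) = 0) :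
    ∏ a : Fin n → K, (u + ∑ i, a i • x i) = u ^ Fintype.card K ^ n := by
  induction n with
  | zero => simp
  | succ n ih =>
    calc ∏ a : Fin (n + 1) → K, (u + ∑ i, a i • x i)
        = ∏ a : Fin n → K, ∏ c : K, ((u + ∑ i, a i • x i.succ) + c • x 0) := by
          rw [← (Fin.consEquiv fun _ => K).prod_comp, Fintype.prod_prod_type, Finset.prod_comm]
          refine Fintype.prod_congr _ _ fun a => Fintype.prod_congr _ _ fun c => ?_
          simp [Fin.sum_univ_succ, add_comm, add_left_comm]
      _ = ∏ a : Fin n → K, (u + ∑ i, a i • x i.succ) ^ Fintype.card K := by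
          simp only [prod_add_smul_eq, hx, mul_zero, sub_zero]
      _ = u ^ Fintype.card K ^ (n + 1) := by
          rw [Finset.prod_pow, ih _ fun i => hx i.succ, ← pow_mul, pow_succ]

end FiniteField

theorem one_sub_prod_linear_forms_mem_ideal_general (p k : ℕ) [Fact p.Prime] :
    (1 - ∏ a : Fin k → ZMod p,
        (1 + ∑ i : Fin k, MvPolynomial.C (a i) * MvPolynomial.X i)) ∈
      Ideal.span (Set.range fun i : Fin k =>
        (MvPolynomial.X i : MvPolynomial (Fin k) (ZMod p)) ^ (p - 1)) := by
  set I := Ideal.span (Set.range fun i : Fin k =>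
    (MvPolynomial.X i : MvPolynomial (Fin k) (ZMod p)) ^ (p - 1))
  let π := Ideal.Quotient.mkₐ (ZMod p) I
  have hX : ∀ i, π (MvPolynomial.X i) ^ (Fintype.card (ZMod p) - 1) = 0 := fun i => by
    rw [ZMod.card, ← map_pow, Ideal.Quotient.mkₐ_eq_mk, Ideal.Quotient.eq_zero_iff_mem]
    exact Ideal.subset_span ⟨i, rfl⟩
  rw [← Ideal.Quotient.eq_zero_iff_mem, ← Ideal.Quotient.mkₐ_eq_mk (ZMod p), map_sub, map_one,
    sub_eq_zero]
  simp only [map_prod, map_add, map_one, map_sum, MvPolynomial.C_mul', map_smul]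
  rw [FiniteField.prod_add_sum_smul_eq_pow 1 _ hX, one_pow]

/-- For a prime `p` and `k ≥ 1`, in `(ℤ/p)[x_1, …, x_k]`, the polynomial
`1 − ∏_{l ∈ L_k} (1 + l)` (the product over all linear forms `l`) lies in the ideal
generated by `x_1^{p−1}, …, x_k^{p−1}`. -/
theorem one_sub_prod_linear_forms_mem_ideal (p k : ℕ) [Fact p.Prime] (hk : 1 ≤ k) :
    (1 - ∏ a : Fin k → ZMod p,
        (1 + ∑ i : Fin k, MvPolynomial.C (a i) * MvPolynomial.X i)) ∈
      Ideal.span (Set.range fun i : Fin k =>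
        (MvPolynomial.X i : MvPolynomial (Fin k) (ZMod p)) ^ (p - 1)) :=
  one_sub_prod_linear_forms_mem_ideal_general p k
end

section
/- Let p be a prime and k ≥ 1. Let L_k denote the set of all linear forms in the polynomial ring (ℤ/p)[x_1, …, x_k], i.e. all polynomials of the form a_1·x_1 + ⋯ + a_k·x_k with coefficients a_i ∈ ℤ/p. Then the polynomial ∏_{l ∈ L_k} (1 + l) is a sum of monomials whose total degrees are all multiples of p − 1; that is, every homogeneous component of ∏_{l ∈ L_k} (1 + l) in a degree not divisible by p − 1 vanishes. -/
/-!
The substitution `x_i ↦ c x_i` by a unit `c` permutes the linear forms (`l_a ↦ l_{c a}`), so it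
fixes `∏ (1 + l)`, while it multiplies the homogeneous component of degree `d` by `c ^ d`.
Over a finite field with `q` elements some unit has `c ^ d ≠ 1` as soon as `q - 1 ∤ d`,
and then that component must vanish.
-/

open MvPolynomial

namespace MvPolynomial

section CommSemiring

variable {σ R : Type*} [CommSemiring R]

noncomputable def scaleVars (c : R) : MvPolynomial σ R →ₐ[R] MvPolynomial σ R :=
  aeval fun i => C c * X i

theorem scaleVars_monomial (c : R) (u : σ →₀ ℕ) (a : R) :
    scaleVars c (monomial u a) = monomial u (c ^ u.degree * a) := by
  rw [scaleVars, aeval_monomial, monomial_eq, algebraMap_eq, C_mul]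
  simp only [Finsupp.prod, mul_pow, Finset.prod_mul_distrib, ← map_pow, ← map_prod,
    Finset.prod_pow_eq_pow_sum, Finsupp.degree_apply]
  ring

theorem coeff_scaleVars (c : R) (m : σ →₀ ℕ) (q : MvPolynomial σ R) :
    coeff m (scaleVars c q) = c ^ m.degree * coeff m q := by
  induction q using MvPolynomial.induction_on' with
  | add q r hq hr => rw [map_add, coeff_add, coeff_add, hq, hr, mul_add]
  | monomial u a =>
    classical
    rw [scaleVars_monomial, coeff_monomial, coeff_monomial]
    split_ifs with h
    · rw [h]
    · rw [mul_zero]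

theorem homogeneousComponent_scaleVars (c : R) (d : ℕ) (q : MvPolynomial σ R) :
    homogeneousComponent d (scaleVars c q) = c ^ d • homogeneousComponent d q := by
  ext m
  rw [coeff_smul, coeff_homogeneousComponent, coeff_homogeneousComponent, coeff_scaleVars]
  split_ifs with h
  · rw [h, smul_eq_mul]
  · rw [smul_zero]

theorem scaleVars_sum_C_mul_X [Fintype σ] (c : R) (a : σ → R) :
    scaleVars c (∑ i, C (a i) * X i) = ∑ i, C ((c • a) i) * X i := by
  simp only [map_sum, map_mul, scaleVars, aeval_C, aeval_X, algebraMap_eq, Pi.smul_apply,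
    smul_eq_mul]
  exact Finset.sum_congr rfl fun i _ => by ring

theorem scaleVars_units_prod_one_add_sum_C_mul_X [Fintype σ] [DecidableEq σ] [Fintype R]
    (u : Rˣ) : scaleVars (u : R) (∏ a : σ → R, (1 + ∑ i, C (a i) * X i)) =
      ∏ a : σ → R, (1 + ∑ i, C (a i) * X i) := by
  rw [map_prod]
  refine Fintype.prod_equiv (MulAction.toPerm u) _ _ fun a => ?_
  rw [map_add, map_one, scaleVars_sum_C_mul_X]
  rfl

end CommSemiring

theorem homogeneousComponent_eq_zero_of_scaleVars_eq_self {σ R : Type*} [CommRing R]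
    [IsDomain R] {c : R} {d : ℕ} (hc : c ^ d ≠ 1) {q : MvPolynomial σ R}
    (hq : scaleVars c q = q) : homogeneousComponent d q = 0 := by
  have h : (c ^ d - 1) • homogeneousComponent d q = 0 := by
    rw [sub_smul, one_smul, ← homogeneousComponent_scaleVars, hq, sub_self]
  exact (smul_eq_zero.mp h).resolve_left (sub_ne_zero.mpr hc)

end MvPolynomial

theorem FiniteField.homogeneousComponent_prod_one_add_sum_C_mul_X_eq_zero
    {K σ : Type*} [Field K] [Fintype K] [Fintype σ] [DecidableEq σ] {d : ℕ}
    (hd : ¬ (Fintype.card K - 1) ∣ d) :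
    homogeneousComponent d (∏ a : σ → K, (1 + ∑ i, C (a i) * X i)) = 0 := by
  obtain ⟨u, hu⟩ : ∃ u : Kˣ, u ^ d ≠ 1 := by
    simpa using mt (FiniteField.forall_pow_eq_one_iff K d).mp hd
  refine homogeneousComponent_eq_zero_of_scaleVars_eq_self (c := (u : K)) ?_
    (scaleVars_units_prod_one_add_sum_C_mul_X u)
  rwa [← Units.val_pow_eq_pow_val, Ne, Units.val_eq_one]

theorem homogeneousComponent_prod_linear_forms_eq_zero_general
    (p k : ℕ) [Fact p.Prime] (d : ℕ) (hd : ¬ (p - 1) ∣ d) :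
    MvPolynomial.homogeneousComponent d
      (∏ a : Fin k → ZMod p,
        (1 + ∑ i : Fin k, MvPolynomial.C (a i) * MvPolynomial.X i)) = 0 :=
  FiniteField.homogeneousComponent_prod_one_add_sum_C_mul_X_eq_zero (by rwa [ZMod.card])

/-- For a prime `p` and `k ≥ 1`, every homogeneous component of
`∏_{l ∈ L_k} (1 + l)` (product over all linear forms in `(ℤ/p)[x_1,…,x_k]`) in a degree
not divisible by `p − 1` vanishes. -/
theorem homogeneousComponent_prod_linear_forms_eq_zero
    (p k : ℕ) [Fact p.Prime] (hk : 1 ≤ k) (d : ℕ) (hd : ¬ (p - 1) ∣ d) :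
    MvPolynomial.homogeneousComponent d
      (∏ a : Fin k → ZMod p,
        (1 + ∑ i : Fin k, MvPolynomial.C (a i) * MvPolynomial.X i)) = 0 :=
  homogeneousComponent_prod_linear_forms_eq_zero_general p k d hd
end
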